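/- Let n ≥ 1 and let w be a word of length n over the alphabet {a,b,c}. Then w lies in the image φ(N_n) if and only if w has the form w = a^i c u a c^j, where i, j ≥ 0 and u is a (possibly empty) word over {a,b,c}. -/

import Mathlib

/-!
A permutation `π` with a single left peak `l` and right valley `r` has descent set exactly
`[l, r)`: every descent lies in a run starting at a left peak. So the one-line word of `π`
increases up to position `l`, decreases down to position `r` and increases afterwards, i.e.
`π_l` is the maximum of `α β` and `π_r` the minimum of `β γ`. Hence every value below `π_r`
lies in `α`, `π_r` lies in `γ`, `π_l` lies in `α` and every value above `π_l` lies in `γ`,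
which is the shape `a^i c u a c^j` of `φ(π)`.

Conversely, for such a word `w`, write the positions of its `a`s increasingly, then those of
its `b`s decreasingly, then those of its `c`s increasingly. Every `b` sits between the first
`c` and the last `a` of `w`, so this permutation descends exactly at the junctions of the
three blocks and inside the middle one, and its canonical decomposition is the three blocks.
-/

/-- The one-line notation of a permutation `π` of `{1,…,n}`, read as a function on 0-based
positions: `permWord π j = π_{j+1}` (values are 1-based; out-of-range positions give `0`). -/
def permWord {n : ℕ} (π : Equiv.Perm (Fin n)) (j : ℕ) : ℕ :=
  if h : j < n then ((π ⟨j, h⟩ : Fin n) : ℕ) + 1 else 0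

/-- `π` contains `σ` as a consecutive pattern: some window of consecutive letters of `π`
has standardization `σ`, i.e. is order-isomorphic to the one-line word of `σ`. -/
def ContainsPat {n m : ℕ} (π : Equiv.Perm (Fin n)) (σ : Equiv.Perm (Fin m)) : Prop :=
  ∃ i : ℕ, i + m ≤ n ∧ ∀ j k : Fin m,
    (permWord π (i + (j : ℕ)) < permWord π (i + (k : ℕ)) ↔ permWord σ j < permWord σ k)

/-- The number of peaks of `π`: 1-based indices `i` with `2 ≤ i ≤ n-1` and
`π_{i-1} < π_i > π_{i+1}`. -/
def pkCount {n : ℕ} (π : Equiv.Perm (Fin n)) : ℕ :=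
  ((Finset.Icc 2 (n - 1)).filter fun i =>
    permWord π (i - 2) < permWord π (i - 1) ∧ permWord π i < permWord π (i - 1)).card

/-- The number of left peaks of `π`: 1-based indices `i ∈ [n-1]` that are peaks,
or `i = 1` with `π_1 > π_2`. -/
def lpkCount {n : ℕ} (π : Equiv.Perm (Fin n)) : ℕ :=
  ((Finset.Icc 1 (n - 1)).filter fun i =>
    (2 ≤ i ∧ permWord π (i - 2) < permWord π (i - 1) ∧ permWord π i < permWord π (i - 1))
      ∨ (i = 1 ∧ permWord π 1 < permWord π 0)).card

/-- The number of peaks of `π⁻¹`. -/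
def ipk {n : ℕ} (π : Equiv.Perm (Fin n)) : ℕ := pkCount π⁻¹

/-- The number of left peaks of `π⁻¹`. -/
def ilpk {n : ℕ} (π : Equiv.Perm (Fin n)) : ℕ := lpkCount π⁻¹
/-- The three-letter alphabet `{a, b, c}`. -/
inductive ABC : Type
  | a : ABC
  | b : ABC
  | c : ABC
  deriving DecidableEq, Repr

open ABC

/-- Words matching one of the alternatives `c`, `bc`, `a⁺b`, `a⁺c` of the regular
expression `(c ∪ bc ∪ a⁺b ∪ a⁺c)`. -/
def Atom (u : List ABC) : Prop :=
  u = [c] ∨ u = [b, c] ∨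
    ∃ i : ℕ, 1 ≤ i ∧ (u = List.replicate i a ++ [b] ∨ u = List.replicate i a ++ [c])

/-- Membership in `W_n`: words of length `n` of the form `a^i c u a c^j` (with `i, j ≥ 0`)
avoiding the subwords (i.e. blocks of consecutive letters) `bba`, `bbb`, `cba`, `cbb`. -/
def Wmem (n : ℕ) (w : List ABC) : Prop :=
  w.length = n ∧
  (∃ (i j : ℕ) (u : List ABC),
      w = List.replicate i a ++ [c] ++ u ++ [a] ++ List.replicate j c) ∧
  ¬ [b, b, a] <:+: w ∧ ¬ [b, b, b] <:+: w ∧ ¬ [c, b, a] <:+: w ∧ ¬ [c, b, b] <:+: w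

/-- `i` is a left peak of `π` (1-based): `i ∈ [n-1]` and either `i` is a peak
(`2 ≤ i ≤ n-1` and `π_{i-1} < π_i > π_{i+1}`) or `i = 1` and `π_1 > π_2`. -/
def IsLeftPeak {n : ℕ} (π : Equiv.Perm (Fin n)) (i : ℕ) : Prop :=
  1 ≤ i ∧ i ≤ n - 1 ∧
    ((2 ≤ i ∧ permWord π (i - 2) < permWord π (i - 1) ∧ permWord π i < permWord π (i - 1))
      ∨ (i = 1 ∧ permWord π 1 < permWord π 0))

/-- `i` is a right valley of `π` (1-based): `i ∈ {2,…,n}` and either `i` is a valley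
(`i ≤ n-1` and `π_{i-1} > π_i < π_{i+1}`) or `i = n` and `π_{n-1} > π_n`. -/
def IsRightValley {n : ℕ} (π : Equiv.Perm (Fin n)) (i : ℕ) : Prop :=
  2 ≤ i ∧ i ≤ n ∧
    ((i ≤ n - 1 ∧ permWord π (i - 1) < permWord π (i - 2) ∧ permWord π (i - 1) < permWord π i)
      ∨ (i = n ∧ permWord π (n - 1) < permWord π (n - 2)))

/-- The 1-based position of the value `p` in the one-line notation of `π`. -/
def posOf {n : ℕ} (π : Equiv.Perm (Fin n)) (p : ℕ) : ℕ := permWord π⁻¹ (p - 1)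

/-- `w = φ(π)`, where `φ` is defined via the canonical decomposition `π = αβγ` (with
`α` increasing up to and including the left peak, `β` decreasing strictly between the left
peak and the right valley, and `γ` increasing from the right valley on): the `p`-th letter
of `w` is `a`, `b`, or `c` according to whether the value `p` lies in `α`, `β`, or `γ`. -/
def IsPhi {n : ℕ} (π : Equiv.Perm (Fin n)) (w : List ABC) : Prop :=
  w.length = n ∧
  ∃ lp rv : ℕ, IsLeftPeak π lp ∧ IsRightValley π rv ∧
    ∀ p : ℕ, 1 ≤ p → p ≤ n →
      w[p - 1]? = some (if posOf π p ≤ lp then a else if posOf π p < rv then b else c)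

def IsFramed (w : List ABC) (p q : ℕ) : Prop :=
  p < q ∧ q < w.length ∧ (∀ k < p, w[k]? = some a) ∧ w[p]? = some c ∧ w[q]? = some a ∧
    ∀ k, q < k → k < w.length → w[k]? = some c

theorem exists_eq_replicate_append_iff_isFramed (w : List ABC) :
    (∃ (i j : ℕ) (u : List ABC),
        w = List.replicate i a ++ [c] ++ u ++ [a] ++ List.replicate j c) ↔
      ∃ p q, IsFramed w p q := by
  constructor
  · rintro ⟨i, j, u, rfl⟩
    have hlen : (List.replicate i a ++ [c] ++ u ++ [a] ++ List.replicate j c).length =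
        i + 1 + u.length + 1 + j := by
      simp only [List.length_append, List.length_replicate, List.length_singleton]
    refine ⟨i, i + 1 + u.length, by omega, by omega, fun k hk => ?_, ?_, ?_,
      fun k hk hk' => ?_⟩ <;>
    simp only [List.getElem?_append, List.getElem?_replicate, List.length_append,
      List.length_replicate, List.length_singleton, List.getElem?_singleton] at * <;>
    split_ifs <;> first | rfl | omega
  · rintro ⟨p, q, hpq, hq, hpre, hp, hqa, hsuf⟩
    refine ⟨p, w.length - (q + 1), (w.drop (p + 1)).take (q - (p + 1)), ?_⟩
    refine List.ext_getElem? fun k => ?_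
    simp only [List.getElem?_append, List.getElem?_replicate, List.length_append,
      List.length_replicate, List.length_take, List.length_drop, List.length_singleton,
      List.getElem?_singleton, List.getElem?_take, List.getElem?_drop]
    split_ifs <;> first
      | exact hpre k (by omega)
      | (rw [show k = p by omega]; exact hp)
      | (congr 1; omega)
      | (rw [show k = q by omega]; exact hqa)
      | exact hsuf k (by omega) (by omega)
      | (simp only [List.getElem?_eq_none_iff]; omega)

theorem IsFramed.lt_and_lt_of_getElem?_eq_b {w : List ABC} {p q v : ℕ} (hf : IsFramed w p q)
    (hv : w[v]? = some b) : p < v ∧ v < q := by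
  obtain ⟨hpq, hq, hpre, hp, hqa, hsuf⟩ := hf
  constructor
  · by_contra! h
    rcases h.lt_or_eq with h | rfl
    · simp [hpre _ h] at hv
    · simp [hp] at hv
  · by_contra! h
    rcases h.lt_or_eq with h | rfl
    · simp [hsuf _ h (List.getElem?_eq_some_iff.mp hv).1] at hv
    · simp [hqa] at hv

theorem List.getElem_lt_getElem_sub_one_iff {α : Type*} [LinearOrder α] {A R C : List α}
    (hA : A.SortedLT) (hR : R.SortedGT) (hC : C.SortedLT) {x y : α} (hx : x ∈ C) (hy : y ∈ A)
    (hRxy : ∀ z ∈ R, x < z ∧ z < y) (hxy : x < y) {k : ℕ} (hk : k < (A ++ R ++ C).length) :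
    (A ++ R ++ C)[k] < (A ++ R ++ C)[k - 1] ↔ A.length ≤ k ∧ k ≤ A.length + R.length := by
  obtain ⟨s, hs, rfl⟩ := List.getElem_of_mem hy
  obtain ⟨t, ht, rfl⟩ := List.getElem_of_mem hx
  simp only [List.length_append] at hk
  simp only [List.getElem_append, List.length_append]
  split_ifs
  all_goals first
    | (exfalso; omega)
    | (rw [hA.getElem_lt_getElem_iff]; omega)
    | (rw [hR.getElem_lt_getElem_iff]; omega)
    | (rw [hC.getElem_lt_getElem_iff]; omega)
    | exact iff_of_true ((hRxy _ (List.getElem_mem _)).2.trans_le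
        (hA.getElem_le_getElem_iff.mpr (by omega))) (by omega)
    | exact iff_of_true (((hC.getElem_le_getElem_iff.mpr (by omega)).trans_lt hxy).trans_le
        (hA.getElem_le_getElem_iff.mpr (by omega))) (by omega)
    | exact iff_of_true ((hC.getElem_le_getElem_iff.mpr (by omega)).trans_lt
        (hRxy _ (List.getElem_mem _)).1) (by omega)

theorem Nat.mem_Ico_of_unique_runStart {P : ℕ → Prop} {l r : ℕ} (h0 : ¬ P 0)
    (hl : ∀ i, P i → ¬ P (i - 1) → i = l) (hr : P (r - 1)) (hr' : ¬ P r) (k : ℕ) :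
    P k ↔ k ∈ Set.Ico l r := by
  have run : ∀ i, P i → l ≤ i ∧ ∀ j, l ≤ j → j ≤ i → P j := by
    intro i
    induction i with
    | zero => exact fun h => absurd h h0
    | succ i ih =>
      intro hi
      by_cases hprev : P i
      · obtain ⟨hli, hrun⟩ := ih hprev
        refine ⟨by omega, fun j hlj hji => ?_⟩
        rcases Nat.lt_or_ge j (i + 1) with hj | hj
        · exact hrun j hlj (by omega)
        · rwa [show j = i + 1 by omega]
      · obtain rfl := hl (i + 1) hi hprev
        exact ⟨le_rfl, fun j hlj hji => by rwa [show j = i + 1 by omega]⟩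
  obtain ⟨hlr, hrun⟩ := run (r - 1) hr
  have hr0 : r ≠ 0 := fun h => h0 (by simpa [h] using hr)
  refine ⟨fun hk => ⟨(run k hk).1, ?_⟩, fun ⟨hlk, hkr⟩ => hrun k hlk (by omega)⟩
  by_contra! hrk
  exact hr' ((run k hk).2 r (by omega) hrk)

theorem Nat.monotoneOn_Icc_of_pred_le {α : Type*} [Preorder α] {f : ℕ → α} {a b : ℕ}
    (h : ∀ k, a < k → k ≤ b → f (k - 1) ≤ f k) : MonotoneOn f (Set.Icc a b) :=
  monotoneOn_of_le_succ Set.ordConnected_Icc fun k _ hk hk' => by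
    simpa using h (k + 1) (Nat.lt_succ_of_le hk.1) (Order.succ_eq_add_one k ▸ hk'.2)

theorem Nat.antitoneOn_Icc_of_le_pred {α : Type*} [Preorder α] {f : ℕ → α} {a b : ℕ}
    (h : ∀ k, a < k → k ≤ b → f k ≤ f (k - 1)) : AntitoneOn f (Set.Icc a b) :=
  Nat.monotoneOn_Icc_of_pred_le (α := αᵒᵈ) h

def positions (w : List ABC) (n : ℕ) (x : ABC) : List (Fin n) :=
  (List.finRange n).filter fun v => w[(v : ℕ)]? = some x

theorem mem_positions {w : List ABC} {n : ℕ} {x : ABC} {v : Fin n} :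
    v ∈ positions w n x ↔ w[(v : ℕ)]? = some x := by
  simp [positions]

theorem sortedLT_positions (w : List ABC) (n : ℕ) (x : ABC) : (positions w n x).SortedLT :=
  ((List.sortedLT_finRange n).pairwise.filter _).sortedLT

theorem positions_append_perm_finRange {w : List ABC} {n : ℕ} (hw : w.length = n) :
    (positions w n a ++ (positions w n b).reverse ++ positions w n c).Perm (List.finRange n) := by
  rw [List.perm_ext_iff_of_nodup _ (List.nodup_finRange n)]
  · intro v
    have hv : (v : ℕ) < w.length := hw ▸ v.isLt
    simp only [List.mem_append, List.mem_reverse, mem_positions, List.getElem?_eq_getElem hv,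
      List.mem_finRange, iff_true]
    cases w[(v : ℕ)] <;> simp
  · simp only [List.nodup_append, List.nodup_reverse, (sortedLT_positions _ _ _).nodup,
      List.mem_append, List.mem_reverse, mem_positions, true_and]
    refine ⟨fun v hv u hu => ?_, fun v hv u hu => ?_⟩ <;> rintro rfl <;> simp_all

section Permutations

variable {n : ℕ} (π : Equiv.Perm (Fin n))

theorem permWord_of_lt {j : ℕ} (hj : j < n) : permWord π j = π ⟨j, hj⟩ + 1 := dif_pos hj

theorem permWord_injOn : Set.InjOn (permWord π) (Set.Iio n) := by
  intro j hj k hk h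
  rw [permWord_of_lt π hj, permWord_of_lt π hk, add_left_inj, Fin.val_inj,
    π.apply_eq_iff_eq] at h
  exact congrArg Fin.val h

theorem posOf_of_le {p : ℕ} (hp : 1 ≤ p) (hpn : p ≤ n) :
    posOf π p = π⁻¹ ⟨p - 1, by omega⟩ + 1 :=
  permWord_of_lt π⁻¹ _

theorem posOf_permWord {j : ℕ} (hj : j < n) : posOf π (permWord π j) = j + 1 := by
  rw [posOf_of_le π (by rw [permWord_of_lt π hj]; omega)
    (by rw [permWord_of_lt π hj]; exact (π _).isLt)]
  simp [permWord_of_lt π hj]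

theorem permWord_posOf {p : ℕ} (hp : 1 ≤ p) (hpn : p ≤ n) :
    permWord π (posOf π p - 1) = p := by
  simp only [posOf_of_le π hp hpn, add_tsub_cancel_right, Fin.is_lt, permWord_of_lt, Fin.eta,
    Equiv.Perm.coe_inv, Equiv.apply_symm_apply]
  omega

theorem exists_permWord_eq {p : ℕ} (hp : 1 ≤ p) (hpn : p ≤ n) :
    ∃ j < n, permWord π j = p :=
  ⟨posOf π p - 1, by simp [posOf_of_le π hp hpn], permWord_posOf π hp hpn⟩

-- 1-based, as in the paper: `i` is a descent when `π_i > π_{i+1}`; so `0` never is one.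
def IsDescent (i : ℕ) : Prop := i < n ∧ permWord π i < permWord π (i - 1)

theorem not_isDescent_zero : ¬ IsDescent π 0 := fun h => lt_irrefl _ h.2

theorem permWord_sub_one_lt_of_not_isDescent {i : ℕ} (hi : 1 ≤ i) (hin : i < n)
    (h : ¬ IsDescent π i) : permWord π (i - 1) < permWord π i := by
  have hne : permWord π (i - 1) ≠ permWord π i :=
    fun he => by have := permWord_injOn π (Set.mem_Iio.mpr (by omega)) hin he; omega
  exact lt_of_le_of_ne (not_lt.mp fun h' => h ⟨hin, h'⟩) hne

theorem isLeftPeak_iff {i : ℕ} :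
    IsLeftPeak π i ↔ IsDescent π i ∧ ¬ IsDescent π (i - 1) := by
  constructor
  · rintro ⟨h1, hi, ⟨h2, hasc, hdesc⟩ | ⟨rfl, hdesc⟩⟩
    · refine ⟨⟨by omega, hdesc⟩, fun h => lt_asymm hasc ?_⟩
      simpa [IsDescent, show i - 1 - 1 = i - 2 by omega] using h.2
    · exact ⟨⟨by omega, hdesc⟩, not_isDescent_zero π⟩
  · rintro ⟨⟨hin, hdesc⟩, hnd⟩
    have h1 : 1 ≤ i := Nat.one_le_iff_ne_zero.mpr fun h => by subst h; exact lt_irrefl _ hdesc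
    refine ⟨h1, by omega, ?_⟩
    rcases Nat.lt_or_ge i 2 with h2 | h2
    · obtain rfl : i = 1 := by omega
      exact Or.inr ⟨rfl, hdesc⟩
    · have hasc := permWord_sub_one_lt_of_not_isDescent π (by omega) (by omega) hnd
      rw [show i - 1 - 1 = i - 2 by omega] at hasc
      exact Or.inl ⟨h2, hasc, hdesc⟩

theorem isRightValley_iff {r : ℕ} :
    IsRightValley π r ↔ IsDescent π (r - 1) ∧ ¬ IsDescent π r := by
  constructor
  · rintro ⟨h2, hrn, ⟨hr, hdesc, hasc⟩ | ⟨hr, hdesc⟩⟩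
    · refine ⟨⟨by omega, by rwa [show r - 1 - 1 = r - 2 by omega]⟩,
        fun h => lt_asymm hasc h.2⟩
    · subst hr
      exact ⟨⟨by omega, by rwa [show r - 1 - 1 = r - 2 by omega]⟩, fun h => lt_irrefl _ h.1⟩
  · rintro ⟨⟨hrn, hdesc⟩, hnd⟩
    have h2 : 2 ≤ r := by
      by_contra! h
      rw [show r - 1 = 0 by omega] at hdesc
      exact lt_irrefl _ hdesc
    rw [show r - 1 - 1 = r - 2 by omega] at hdesc
    refine ⟨h2, by omega, ?_⟩
    rcases Nat.lt_or_ge r n with hr | hr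
    · exact Or.inl ⟨by omega, hdesc, permWord_sub_one_lt_of_not_isDescent π (by omega) hr hnd⟩
    · obtain rfl : r = n := by omega
      exact Or.inr ⟨rfl, hdesc⟩

theorem lpkCount_eq_one_iff : lpkCount π = 1 ↔ ∃ l, ∀ i, IsLeftPeak π i ↔ i = l := by
  classical
  have hfilter : lpkCount π = ((Finset.Icc 1 (n - 1)).filter (IsLeftPeak π)).card := by
    unfold lpkCount IsLeftPeak
    congr 1
    ext i
    simp +contextual [Finset.mem_Icc]
  rw [hfilter, Finset.card_eq_one]
  refine exists_congr fun l => ⟨fun h i => ?_, fun h => ?_⟩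
  · rw [← Finset.mem_singleton, ← h, Finset.mem_filter, Finset.mem_Icc]
    exact (and_iff_right_of_imp fun hi => ⟨hi.1, hi.2.1⟩).symm
  · ext i
    rw [Finset.mem_filter, Finset.mem_Icc, Finset.mem_singleton, ← h i]
    exact and_iff_right_of_imp fun hi => ⟨hi.1, hi.2.1⟩

def DescentSetEqIco (l r : ℕ) : Prop :=
  l < r ∧ ∀ k, IsDescent π k ↔ l ≤ k ∧ k < r

namespace DescentSetEqIco

variable {π} {l r : ℕ}

theorem of_lpkCount_eq_one (h : lpkCount π = 1) (hl : IsLeftPeak π l) (hr : IsRightValley π r) :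
    DescentSetEqIco π l r := by
  obtain ⟨l', hl'⟩ := (lpkCount_eq_one_iff π).mp h
  rw [isRightValley_iff] at hr
  have hD : ∀ k, IsDescent π k ↔ l ≤ k ∧ k < r :=
    Nat.mem_Ico_of_unique_runStart (not_isDescent_zero π) (fun i hi hi' => by
      rw [(hl' i).mp ((isLeftPeak_iff π).mpr ⟨hi, hi'⟩), ← (hl' l).mp hl]) hr.1 hr.2
  exact ⟨by have := (hD (r - 1)).mp hr.1; omega, hD⟩

theorem one_le (h : DescentSetEqIco π l r) : 1 ≤ l :=
  Nat.one_le_iff_ne_zero.mpr fun hl =>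
    not_isDescent_zero π ((h.2 0).mpr ⟨by omega, by have := h.1; omega⟩)

theorem lpkCount_eq_one (h : DescentSetEqIco π l r) :
    lpkCount π = 1 ∧ IsLeftPeak π l ∧ IsRightValley π r := by
  have hl := h.one_le
  obtain ⟨hlr, hD⟩ := h
  have hpeak : ∀ i, IsLeftPeak π i ↔ i = l := fun i => by
    rw [isLeftPeak_iff, hD, hD]; omega
  refine ⟨(lpkCount_eq_one_iff π).mpr ⟨l, hpeak⟩, (hpeak l).mpr rfl, ?_⟩
  rw [isRightValley_iff, hD, hD]; omega

theorem le (h : DescentSetEqIco π l r) : r ≤ n := by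
  have := ((h.2 (r - 1)).mpr (by have := h.1; omega)).1
  omega

theorem monotoneOn_left (h : DescentSetEqIco π l r) :
    MonotoneOn (permWord π) (Set.Icc 0 (l - 1)) :=
  Nat.monotoneOn_Icc_of_pred_le fun k hk hkl =>
    (permWord_sub_one_lt_of_not_isDescent π hk (by have := h.le; have := h.1; omega)
      (by rw [h.2]; omega)).le

theorem antitoneOn_middle (h : DescentSetEqIco π l r) :
    AntitoneOn (permWord π) (Set.Icc (l - 1) (r - 1)) :=
  Nat.antitoneOn_Icc_of_le_pred fun k hk hkr => ((h.2 k).mpr (by omega)).2.le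

theorem monotoneOn_right (h : DescentSetEqIco π l r) :
    MonotoneOn (permWord π) (Set.Icc (r - 1) (n - 1)) :=
  Nat.monotoneOn_Icc_of_pred_le fun k hk hkn =>
    (permWord_sub_one_lt_of_not_isDescent π (by omega) (by omega) (by rw [h.2]; omega)).le

theorem permWord_le_leftPeak (h : DescentSetEqIco π l r) {j : ℕ} (hj : j ≤ r - 1) :
    permWord π j ≤ permWord π (l - 1) := by
  rcases le_total j (l - 1) with hjl | hjl
  · exact h.monotoneOn_left ⟨by omega, hjl⟩ ⟨by omega, le_rfl⟩ hjl
  · exact h.antitoneOn_middle ⟨le_rfl, by have := h.1; omega⟩ ⟨hjl, hj⟩ hjl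

theorem rightValley_le_permWord (h : DescentSetEqIco π l r) {j : ℕ} (hj : l - 1 ≤ j)
    (hjn : j < n) : permWord π (r - 1) ≤ permWord π j := by
  rcases le_total j (r - 1) with hjr | hjr
  · exact h.antitoneOn_middle ⟨hj, hjr⟩ ⟨by have := h.1; omega, le_rfl⟩ hjr
  · exact h.monotoneOn_right ⟨le_rfl, by have := h.le; omega⟩ ⟨hjr, by omega⟩ hjr

theorem isFramed {w : List ABC} (h : DescentSetEqIco π l r) (hw : w.length = n)
    (hφ : ∀ p, 1 ≤ p → p ≤ n →
      w[p - 1]? = some (if posOf π p ≤ l then a else if posOf π p < r then b else c)) :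
    IsFramed w (permWord π (r - 1) - 1) (permWord π (l - 1) - 1) := by
  have hlr := h.1
  have hl := h.one_le
  have hrn := h.le
  have hval : ∀ j < n, 1 ≤ permWord π j ∧ permWord π j ≤ n := fun j hj => by
    rw [permWord_of_lt π hj]; exact ⟨by omega, (π _).isLt⟩
  have letter : ∀ j < n, w[permWord π j - 1]? =
      some (if j + 1 ≤ l then a else if j + 1 < r then b else c) := fun j hj => by
    rw [← posOf_permWord π hj]
    exact hφ _ (hval j hj).1 (hval j hj).2
  have hvr := hval (r - 1) (by omega)
  have hvl := hval (l - 1) (by omega)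
  have hlt : permWord π (r - 1) < permWord π (l - 1) :=
    lt_of_le_of_ne (h.permWord_le_leftPeak le_rfl) fun he => by
      have := permWord_injOn π (Set.mem_Iio.mpr (by omega)) (Set.mem_Iio.mpr (by omega)) he; omega
  refine ⟨by omega, by omega, fun k hk => ?_, ?_, ?_, fun k hk hkn => ?_⟩
  · obtain ⟨j, hj, hjk⟩ := exists_permWord_eq π (p := k + 1) (by omega) (by omega)
    have hjl : j < l - 1 := by
      by_contra! hjl
      have := h.rightValley_le_permWord hjl hj; omega
    simpa [hjk, show j + 1 ≤ l by omega] using letter j hj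
  · simpa [show ¬ r - 1 + 1 ≤ l by omega, show ¬ r - 1 + 1 < r by omega]
      using letter (r - 1) (by omega)
  · simpa [Nat.sub_add_cancel hl] using letter (l - 1) (by omega)
  · obtain ⟨j, hj, hjk⟩ := exists_permWord_eq π (p := k + 1) (by omega) (by omega)
    have hjr : r - 1 < j := by
      by_contra! hjr
      have := h.permWord_le_leftPeak hjr; omega
    simpa [hjk, show ¬ j + 1 ≤ l by omega, show ¬ j + 1 < r by omega] using letter j hj

end DescentSetEqIco

theorem exists_permWord_eq_getElem {L : List (Fin n)} (hL : L.Perm (List.finRange n)) :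
    ∃ π : Equiv.Perm (Fin n), ∀ j (hj : j < L.length), permWord π j = L[j] + 1 := by
  have hlen : n = L.length := by simpa using hL.length_eq.symm
  have hnd : L.Nodup := hL.nodup_iff.mpr (List.nodup_finRange n)
  refine ⟨(finCongr hlen).trans (hnd.getEquivOfForallMemList L fun v =>
    hL.mem_iff.mpr (List.mem_finRange v)), fun j hj => ?_⟩
  rw [permWord_of_lt _ (hlen ▸ hj)]
  simp

theorem exists_isPhi_of_isFramed {w : List ABC} {p q : ℕ} (hw : w.length = n)
    (hf : IsFramed w p q) : ∃ π : Equiv.Perm (Fin n), lpkCount π = 1 ∧ IsPhi π w := by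
  obtain ⟨hpq, hq, -, hp, hqa, -⟩ := id hf
  have hperm := positions_append_perm_finRange hw
  obtain ⟨π, hπ⟩ := exists_permWord_eq_getElem hperm
  set A := positions w n a
  set B := positions w n b
  set C := positions w n c
  have hLlen : (A ++ B.reverse ++ C).length = n := hperm.length_eq.trans (List.length_finRange)
  have hlen : A.length + B.length + C.length = n := by
    simpa only [List.length_append, List.length_reverse] using hLlen
  have hpC : (⟨p, by omega⟩ : Fin n) ∈ C := mem_positions.mpr hp
  have hqA : (⟨q, by omega⟩ : Fin n) ∈ A := mem_positions.mpr hqa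
  have hB : ∀ v ∈ B.reverse, (⟨p, by omega⟩ : Fin n) < v ∧ v < ⟨q, by omega⟩ := fun v hv =>
    hf.lt_and_lt_of_getElem?_eq_b (mem_positions.mp (List.mem_reverse.mp hv))
  have hAs : A.SortedLT := sortedLT_positions w n a
  have hBs : B.reverse.SortedGT := (sortedLT_positions w n b).reverse
  have hCs : C.SortedLT := sortedLT_positions w n c
  have hC : 1 ≤ C.length := List.length_pos_of_mem hpC
  have hD : DescentSetEqIco π A.length (A.length + B.length + 1) := by
    refine ⟨by omega, fun k => ?_⟩
    unfold IsDescent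
    by_cases hk : k < n
    · rw [hπ k (by omega), hπ (k - 1) (by omega), add_lt_add_iff_right,
        Fin.val_fin_lt, List.getElem_lt_getElem_sub_one_iff hAs hBs hCs hpC hqA hB hpq,
        List.length_reverse]
      omega
    · simp only [hk, false_and, false_iff]
      omega
  obtain ⟨hlpk, hl, hr⟩ := hD.lpkCount_eq_one
  refine ⟨π, hlpk, hw, _, _, hl, hr, fun v hv hvn => ?_⟩
  obtain ⟨j, hj, rfl⟩ := exists_permWord_eq π hv hvn
  have hjL : j < (A ++ B.reverse ++ C).length := by omega
  rw [posOf_permWord π hj, hπ j hjL, add_tsub_cancel_right]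
  simp only [List.getElem_append, List.length_append, List.length_reverse]
  split_ifs <;> first
    | omega
    | exact mem_positions.mp (List.getElem_mem _)
    | exact mem_positions.mp (List.mem_reverse.mp (List.getElem_mem _))

end Permutations

theorem stmt12_general (n : ℕ) (w : List ABC) (hw : w.length = n) :
    (∃ π : Equiv.Perm (Fin n), lpkCount π = 1 ∧ IsPhi π w) ↔
      ∃ (i j : ℕ) (u : List ABC),
        w = List.replicate i a ++ [c] ++ u ++ [a] ++ List.replicate j c := by
  rw [exists_eq_replicate_append_iff_isFramed]
  constructor
  · rintro ⟨π, hlpk, hw', lp, rv, hlp, hrv, hφ⟩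
    exact ⟨_, _, (DescentSetEqIco.of_lpkCount_eq_one hlpk hlp hrv).isFramed hw' hφ⟩
  · rintro ⟨p, q, hf⟩
    exact exists_isPhi_of_isFramed hw hf

/-- **Lemma 9 (Troyka–Zhuang).** A word `w` of length `n` lies in `φ(N_n)` (where `N_n` is
the set of permutations of `S_n` with exactly one left peak) if and only if it has the form
`w = a^i c u a c^j` with `i, j ≥ 0`. -/
theorem stmt12 (n : ℕ) (hn : 1 ≤ n) (w : List ABC) (hw : w.length = n) :
    (∃ π : Equiv.Perm (Fin n), lpkCount π = 1 ∧ IsPhi π w) ↔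
      ∃ (i j : ℕ) (u : List ABC),
        w = List.replicate i a ++ [c] ++ u ++ [a] ++ List.replicate j c :=
  stmt12_general n w hw
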